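/- For the hyperbolic discount function S(t) = (1 + t)^{−α} with α > 0, preference reversal can occur: there exist rewards 0 < r₁ < r₂ and delays 0 ≤ t₁ < t₂ such that S(t₁) r₁ > S(t₂) r₂ (the smaller-sooner reward is preferred at time 0), yet for all sufficiently large shifts s, S(t₁ + s) r₁ < S(t₂ + s) r₂ (the larger-later reward is preferred after shifting both delays by s). -/

import Mathlib

/-!
For hyperbolic discounting the ratio
`S (t₂ + s) / S (t₁ + s) = ((1 + t₁ + s) / (1 + t₂ + s)) ^ α` tends to `1` as `s → ∞`,
while at `s = 0` it is strictly below `1`. Any reward ratio `r₁ / r₂` strictly between these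
two values produces a reversal.
-/

open Real Filter Topology

theorem tendsto_add_div_add_atTop (a b : ℝ) :
    Tendsto (fun s : ℝ => (a + s) / (b + s)) atTop (𝓝 1) := by
  have h : Tendsto (fun s : ℝ => 1 + (a - b) / (b + s)) atTop (𝓝 (1 + 0)) :=
    tendsto_const_nhds.add <|
      tendsto_const_nhds.div_atTop (tendsto_atTop_add_const_left _ b tendsto_id)
  rw [add_zero] at h
  refine h.congr' ?_
  filter_upwards [eventually_gt_atTop (-b)] with s hs
  have hbs : b + s ≠ 0 := by linarith
  field_simp
  ring

theorem tendsto_add_rpow_div_add_rpow_atTop (a b β : ℝ) :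
    Tendsto (fun s : ℝ => (a + s) ^ β / (b + s) ^ β) atTop (𝓝 1) := by
  have h := (tendsto_add_div_add_atTop a b).rpow_const (p := β) (Or.inl one_ne_zero)
  rw [one_rpow] at h
  refine h.congr' ?_
  filter_upwards [eventually_ge_atTop (-a), eventually_ge_atTop (-b)] with s ha hb
  exact div_rpow (by linarith) (by linarith) β

theorem exists_preference_reversal_of_tendsto_div {S : ℝ → ℝ} {t₁ t₂ : ℝ}
    (hpos : ∀ t, t₁ ≤ t → 0 < S t) (ht : t₁ < t₂) (hlt : S t₂ < S t₁)
    (hlim : Tendsto (fun s => S (t₂ + s) / S (t₁ + s)) atTop (𝓝 1)) :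
    ∃ r₁ r₂ : ℝ, 0 < r₁ ∧ r₁ < r₂ ∧ S t₁ * r₁ > S t₂ * r₂ ∧
      ∃ s₀ : ℝ, ∀ s, s₀ ≤ s → S (t₁ + s) * r₁ < S (t₂ + s) * r₂ := by
  have h₁ := hpos t₁ le_rfl
  have h₂ := hpos t₂ ht.le
  obtain ⟨c, hc_gt, hc_lt⟩ : ∃ c, S t₂ / S t₁ < c ∧ c < 1 :=
    exists_between ((div_lt_one h₁).2 hlt)
  have hc_pos : 0 < c := (div_pos h₂ h₁).trans hc_gt
  obtain ⟨s₀, hs₀⟩ := eventually_atTop.1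
    ((hlim.eventually (lt_mem_nhds hc_lt)).and (eventually_ge_atTop 0))
  refine ⟨c, 1, hc_pos, hc_lt, ?_, s₀, fun s hs => ?_⟩
  · rw [div_lt_iff₀ h₁] at hc_gt
    linarith
  · obtain ⟨hratio, hs_nonneg⟩ := hs₀ s hs
    rw [lt_div_iff₀ (hpos _ (by linarith))] at hratio
    linarith

/-- Preference reversal under hyperbolic discounting `S(t) = (1 + t)^(-α)`: there are
rewards `0 < r₁ < r₂` and delays `0 ≤ t₁ < t₂` such that the smaller-sooner reward
is preferred initially, yet for all sufficiently large common shifts `s` the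
larger-later reward is preferred. -/
theorem hyperbolic_preference_reversal (α : ℝ) (hα : 0 < α)
    (S : ℝ → ℝ) (hS : ∀ t, S t = (1 + t) ^ (-α)) :
    ∃ r₁ r₂ t₁ t₂ : ℝ, 0 < r₁ ∧ r₁ < r₂ ∧ 0 ≤ t₁ ∧ t₁ < t₂ ∧
      S t₁ * r₁ > S t₂ * r₂ ∧
      ∃ s₀ : ℝ, ∀ s, s₀ ≤ s → S (t₁ + s) * r₁ < S (t₂ + s) * r₂ := by
  obtain rfl : S = fun t => (1 + t) ^ (-α) := funext hS
  have hpos : ∀ t : ℝ, 0 ≤ t → 0 < (1 + t) ^ (-α) := fun t ht =>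
    rpow_pos_of_pos (by linarith) _
  have hlt : (1 + 1 : ℝ) ^ (-α) < (1 + 0) ^ (-α) :=
    rpow_lt_rpow_of_neg (by norm_num) (by norm_num) (neg_neg_of_pos hα)
  have hlim :
      Tendsto (fun s : ℝ => (1 + (1 + s)) ^ (-α) / (1 + (0 + s)) ^ (-α)) atTop (𝓝 1) := by
    simpa only [← add_assoc, add_zero] using
      tendsto_add_rpow_div_add_rpow_atTop (1 + 1) 1 (-α)
  obtain ⟨r₁, r₂, hr₁, hr, h_sooner, h_later⟩ :=
    exists_preference_reversal_of_tendsto_div hpos zero_lt_one hlt hlim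
  exact ⟨r₁, r₂, 0, 1, hr₁, hr, le_rfl, zero_lt_one, h_sooner, h_later⟩
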